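/- Let n ≥ 3 be odd, let k, ε, ε₁, l be integers with 1 ≤ k ≤ n−2, ε ∈ {0,1}, ε₁ ∈ {0,1}, and l ≥ max{ε+ε₁, −(n+1)/2 + k}. In ℝ^n define the bilinear form B(x,y) = Σ_i x_i y_i − (Σ_i x_i)(Σ_i y_i)/(n+1), set ρ = (2n, 2(n−1), …, 2) (i.e. ρ_i = 2(n+1−i)), and let λ = λ⁺(k,ε,ε₁,l) be the vector with first entry (n+5)/2 − k + 2l − ε − ε₁, second entry (n+3)/2 − k + l + ε₁, followed by n−k−2 entries equal to (n+3)/2 − k + l, then one entry equal to (n+1)/2 − k + l + ε, then k−1 entries equal to (n+1)/2 − k + l. Then B(λ+ρ, λ) + (n−4)(n+1)/4 = ((l+1) + n − k − ε₁)(2(l+1) + n + 1 − 2ε) − (n+1)(1−ε₁). -/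

import Mathlib

/-!
On each of the blocks `2 ≤ i < n - k` and `n - k < i < n` of coordinate indices the weight `λ⁺`
is constant and `2δ_i = 2(n - i)` is affine in `i`, so the three sums that enter `B(λ + 2δ, λ)`,
namely `∑ λ_i`, `∑ 2δ_i` and `∑ (λ_i + 2δ_i) λ_i`, have closed forms by Gauss's summation formula.
What remains is polynomial algebra, valid because `ε` and `ε₁` lie in `{0, 1}`.
-/

open Finset

theorem sum_range_eq_blocks {M : Type*} [AddCommMonoid M] (g : ℕ → M) {m n : ℕ}
    (hm : 2 ≤ m) (hmn : m < n) :
    ∑ i ∈ range n, g i = g 0 + g 1 + ∑ i ∈ Ico 2 m, g i + g m + ∑ i ∈ Ico (m + 1) n, g i := by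
  rw [range_eq_Ico, ← sum_Ico_consecutive g (Nat.zero_le 2) (hm.trans hmn.le),
    ← sum_Ico_consecutive g hm hmn.le, sum_eq_sum_Ico_succ_bot hmn,
    show Ico 0 2 = {0, 1} by rfl, sum_pair zero_ne_one]
  abel

section AffineBlocks

variable {K : Type*} [Field K] [CharZero K]

theorem sum_Ico_affine (u v : K) {a b : ℕ} (hab : a ≤ b) :
    ∑ i ∈ Ico a b, (u + v * i) = (b - a) * (u + v * (a + b - 1) / 2) := by
  induction b, hab using Nat.le_induction with
  | base => simp
  | succ b hab ih => rw [sum_Ico_succ_top hab, ih]; push_cast; ring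

theorem sum_range_of_affine_on_blocks (g : ℕ → K) (u₂ v₂ u₃ v₃ : K) {m n : ℕ}
    (hm : 2 ≤ m) (hmn : m < n) (h₂ : ∀ i ∈ Ico 2 m, g i = u₂ + v₂ * i)
    (h₃ : ∀ i ∈ Ico (m + 1) n, g i = u₃ + v₃ * i) :
    ∑ i ∈ range n, g i = g 0 + g 1 + (m - 2) * (u₂ + v₂ * (m + 1) / 2) + g m
      + (n - m - 1) * (u₃ + v₃ * (m + n) / 2) := by
  rw [sum_range_eq_blocks g hm hmn, sum_congr rfl h₂, sum_congr rfl h₃, sum_Ico_affine _ _ hm,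
    sum_Ico_affine _ _ hmn]
  push_cast
  ring

end AffineBlocks

-- `λ⁺(k,ε,ε₁,l)` and `2δ_{SU(n+1)}`, with coordinates indexed from `0`.
noncomputable def lamPlus (n k ε ε₁ l : ℕ) (i : ℕ) : ℝ :=
  if i = 0 then ((n : ℝ) + 5) / 2 - k + 2 * l - ε - ε₁
  else if i = 1 then ((n : ℝ) + 3) / 2 - k + l + ε₁
  else if i + k < n then ((n : ℝ) + 3) / 2 - k + l
  else if i + k = n then ((n : ℝ) + 1) / 2 - k + l + ε
  else ((n : ℝ) + 1) / 2 - k + l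

noncomputable def twoDelta (n : ℕ) (i : ℕ) : ℝ := 2 * ((n : ℝ) + 1 - ((i : ℝ) + 1))

theorem sum_twoDelta (n : ℕ) : ∑ i ∈ range n, twoDelta n i = n * (n + 1) := by
  rw [range_eq_Ico, sum_congr rfl fun i _ => show twoDelta n i = 2 * n + (-2) * i by
    unfold twoDelta; ring, sum_Ico_affine _ _ n.zero_le]
  push_cast
  ring

section LamPlus

variable {n k ε ε₁ l i : ℕ}

theorem lamPlus_zero : lamPlus n k ε ε₁ l 0 = ((n : ℝ) + 5) / 2 - k + 2 * l - ε - ε₁ := rfl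

theorem lamPlus_one : lamPlus n k ε ε₁ l 1 = ((n : ℝ) + 3) / 2 - k + l + ε₁ := by
  rw [lamPlus, if_neg one_ne_zero, if_pos rfl]

theorem lamPlus_of_add_lt (hi : 2 ≤ i) (h : i + k < n) :
    lamPlus n k ε ε₁ l i = ((n : ℝ) + 3) / 2 - k + l := by
  rw [lamPlus, if_neg (by omega), if_neg (by omega), if_pos h]

theorem lamPlus_of_add_eq (hi : 2 ≤ i) (h : i + k = n) :
    lamPlus n k ε ε₁ l i = ((n : ℝ) + 1) / 2 - k + l + ε := by
  rw [lamPlus, if_neg (by omega), if_neg (by omega), if_neg (by omega), if_pos h]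

theorem lamPlus_of_lt_add (hi : 2 ≤ i) (h : n < i + k) :
    lamPlus n k ε ε₁ l i = ((n : ℝ) + 1) / 2 - k + l := by
  rw [lamPlus, if_neg (by omega), if_neg (by omega), if_neg (by omega), if_neg (by omega)]

theorem sum_lamPlus (hk : 1 ≤ k) (hkn : k + 2 ≤ n) :
    ∑ i ∈ range n, lamPlus n k ε ε₁ l i = n * (((n : ℝ) + 1) / 2 - k + l) + n - k + l + 1 := by
  rw [sum_range_of_affine_on_blocks _ (((n : ℝ) + 3) / 2 - k + l) 0 (((n : ℝ) + 1) / 2 - k + l) 0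
    (m := n - k) (by omega) (by omega)
    (fun i hi => by rw [mem_Ico] at hi; rw [lamPlus_of_add_lt (by omega) (by omega)]; ring)
    (fun i hi => by rw [mem_Ico] at hi; rw [lamPlus_of_lt_add (by omega) (by omega)]; ring),
    lamPlus_zero, lamPlus_one, lamPlus_of_add_eq (i := n - k) (by omega) (by omega),
    Nat.cast_sub (by omega)]
  ring

-- Write `λ⁺_i = t + d_i` with `t = (n+1)/2 - k + l` and
-- `d = (l + 2 - ε - ε₁, 1 + ε₁, 1, …, 1, ε, 0, …, 0)`, so that `∑ d_i = n - k + l + 1`;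
-- the right side is `∑ (t + d_i + 2δ_i)(t + d_i)` expanded accordingly.
theorem sum_lamPlus_add_twoDelta_mul (hk : 1 ≤ k) (hkn : k + 2 ≤ n) :
    ∑ i ∈ range n, (lamPlus n k ε ε₁ l i + twoDelta n i) * lamPlus n k ε ε₁ l i =
      n * (((n : ℝ) + 1) / 2 - k + l) * (((n : ℝ) + 1) / 2 - k + l + n + 1)
      + 2 * (((n : ℝ) + 1) / 2 - k + l) * (n - k + l + 1)
      + (l + 2 - ε - ε₁) * (l + 2 - ε - ε₁ + 2 * n) + (1 + ε₁) * (1 + ε₁ + 2 * n - 2)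
      + (n - k - 2) * (n + k) + ε * (ε + 2 * k) := by
  set c₂ : ℝ := ((n : ℝ) + 3) / 2 - k + l
  set c₃ : ℝ := ((n : ℝ) + 1) / 2 - k + l
  rw [sum_range_of_affine_on_blocks _ ((c₂ + 2 * n) * c₂) (-2 * c₂) ((c₃ + 2 * n) * c₃) (-2 * c₃)
    (m := n - k) (by omega) (by omega)
    (fun i hi => by
      rw [mem_Ico] at hi; rw [lamPlus_of_add_lt (by omega) (by omega), twoDelta]; ring)
    (fun i hi => by
      rw [mem_Ico] at hi; rw [lamPlus_of_lt_add (by omega) (by omega), twoDelta]; ring),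
    lamPlus_zero, lamPlus_one, lamPlus_of_add_eq (i := n - k) (by omega) (by omega)]
  simp only [twoDelta, c₂, c₃, Nat.cast_sub (show k ≤ n by omega)]
  ring

end LamPlus

theorem cpn_rs_eigenvalue_plus_general (n k ε ε₁ l : ℕ)
    (hk1 : 1 ≤ k) (hk2 : k ≤ n - 2) (hε : ε = 0 ∨ ε = 1) (hε₁ : ε₁ = 0 ∨ ε₁ = 1) :
    let ρ : Fin n → ℝ := fun i => 2 * ((n : ℝ) + 1 - ((i : ℕ) + 1))
    let lam : Fin n → ℝ := fun i =>
      if (i : ℕ) = 0 then ((n : ℝ) + 5) / 2 - k + 2 * l - ε - ε₁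
      else if (i : ℕ) = 1 then ((n : ℝ) + 3) / 2 - k + l + ε₁
      else if (i : ℕ) + k < n then ((n : ℝ) + 3) / 2 - k + l
      else if (i : ℕ) + k = n then ((n : ℝ) + 1) / 2 - k + l + ε
      else ((n : ℝ) + 1) / 2 - k + l
    let B : (Fin n → ℝ) → (Fin n → ℝ) → ℝ := fun x y =>
      (∑ i, x i * y i) - (∑ i, x i) * (∑ i, y i) / ((n : ℝ) + 1)
    B (fun i => lam i + ρ i) lam + ((n : ℝ) - 4) * ((n : ℝ) + 1) / 4
      = (((l : ℝ) + 1) + (n : ℝ) - k - ε₁) * (2 * ((l : ℝ) + 1) + (n : ℝ) + 1 - 2 * ε)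
        - ((n : ℝ) + 1) * (1 - (ε₁ : ℝ)) := by
  intro ρ lam B
  have hkn : k + 2 ≤ n := by omega
  have hB : B (fun i => lam i + ρ i) lam =
      ∑ i ∈ range n, (lamPlus n k ε ε₁ l i + twoDelta n i) * lamPlus n k ε ε₁ l i
        - (∑ i ∈ range n, lamPlus n k ε ε₁ l i + ∑ i ∈ range n, twoDelta n i)
          * (∑ i ∈ range n, lamPlus n k ε ε₁ l i) / (n + 1) := by
    simp only [← sum_add_distrib, ← Fin.sum_univ_eq_sum_range]
    rfl
  rw [hB, sum_lamPlus_add_twoDelta_mul hk1 hkn, sum_lamPlus hk1 hkn, sum_twoDelta]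
  obtain rfl | rfl := hε <;> obtain rfl | rfl := hε₁ <;> push_cast <;> field_simp <;> ring

/-- On `ℂP^n` with `n` odd, Freudenthal's formula for the highest weight `λ⁺(k,ε,ε₁,l)`
of an irreducible summand of `(Ker P*)⁺ ⊂ L²(S_{3/2})`, `1 ≤ k ≤ n-2`:
`B(λ+ρ, λ) + (n-4)(n+1)/4 = ((l+1)+n-k-ε₁)(2(l+1)+n+1-2ε) - (n+1)(1-ε₁)`. -/
theorem cpn_rs_eigenvalue_plus (n k ε ε₁ l : ℕ) (hn : Odd n) (hn3 : 3 ≤ n)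
    (hk1 : 1 ≤ k) (hk2 : k ≤ n - 2) (hε : ε = 0 ∨ ε = 1) (hε₁ : ε₁ = 0 ∨ ε₁ = 1)
    (hl1 : ε + ε₁ ≤ l) (hl2 : (k : ℤ) - ((n : ℤ) + 1) / 2 ≤ (l : ℤ)) :
    let ρ : Fin n → ℝ := fun i => 2 * ((n : ℝ) + 1 - ((i : ℕ) + 1))
    let lam : Fin n → ℝ := fun i =>
      if (i : ℕ) = 0 then ((n : ℝ) + 5) / 2 - k + 2 * l - ε - ε₁
      else if (i : ℕ) = 1 then ((n : ℝ) + 3) / 2 - k + l + ε₁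
      else if (i : ℕ) + k < n then ((n : ℝ) + 3) / 2 - k + l
      else if (i : ℕ) + k = n then ((n : ℝ) + 1) / 2 - k + l + ε
      else ((n : ℝ) + 1) / 2 - k + l
    let B : (Fin n → ℝ) → (Fin n → ℝ) → ℝ := fun x y =>
      (∑ i, x i * y i) - (∑ i, x i) * (∑ i, y i) / ((n : ℝ) + 1)
    B (fun i => lam i + ρ i) lam + ((n : ℝ) - 4) * ((n : ℝ) + 1) / 4
      = (((l : ℝ) + 1) + (n : ℝ) - k - ε₁) * (2 * ((l : ℝ) + 1) + (n : ℝ) + 1 - 2 * ε)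
        - ((n : ℝ) + 1) * (1 - (ε₁ : ℝ)) :=
  cpn_rs_eigenvalue_plus_general n k ε ε₁ l hk1 hk2 hε hε₁
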